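/- For every real number t > 0, define V₉(t) = 7t(2 + 7t⁻³) if t⁻³ ≤ 10/49 and V₉(t) = 24t if t⁻³ ≥ 10/49. Then V₉(t) ∈ E(t), and every element e of E(t) with e ∉ {γ₁(t), γ₂(t), γ₃(t), γ₄(t), γ₅(t), γ₆(t), 8t, t(14 + t⁻³)} satisfies e ≥ V₉(t). -/

import Mathlib

/-- `γ_n(t) = t·n·(2 + n·t⁻³)` -/
noncomputable def gammaF (t : ℝ) (n : ℕ) : ℝ := t * n * (2 + n * (t ^ 3)⁻¹)

/-- `α_k(t) = t·(k(k+2) − 1 + t⁻³)` -/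
noncomputable def alphaF (t : ℝ) (k : ℕ) : ℝ := t * (k * (k + 2) - 1 + (t ^ 3)⁻¹)

/-- `β_l(t) = t·l·(l+2)` -/
noncomputable def betaF (t : ℝ) (l : ℕ) : ℝ := t * l * (l + 2)

/-- The set `E(t)` of nonzero eigenvalues of the unit-volume Berger sphere Laplacian. -/
def EV (t : ℝ) : Set ℝ :=
  {x | ∃ n : ℕ, 1 ≤ n ∧ x = gammaF t n} ∪
  {x | ∃ k : ℕ, Odd k ∧ 1 ≤ k ∧ x = alphaF t k} ∪
  {x | ∃ l : ℕ, Even l ∧ 2 ≤ l ∧ x = betaF t l}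
/-!
Apart from `γ₁, …, γ₆`, `β₂ = 8t`, `α₁ = γ₁` and `α₃ = t(14 + t⁻³)`, every eigenvalue is at least
`γ₇` or at least `β₄ = 24t`: the three families increase with their index, and
`α₅ = t(34 + t⁻³) ≥ β₄`. Since `γ₇ - β₄ = 49t(t⁻³ - 10/49)`, the smaller of `γ₇` and `β₄` is the
one prescribed by the sign of `t⁻³ - 10/49`, and it is `V₉(t)`.
-/

variable {t : ℝ}

lemma gammaF_monotone (ht : 0 ≤ t) : Monotone (gammaF t) := by
  intro m n hmn
  unfold gammaF
  gcongr

lemma alphaF_monotone (ht : 0 ≤ t) : Monotone (alphaF t) := by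
  intro k k' hk
  unfold alphaF
  gcongr

lemma betaF_monotone (ht : 0 ≤ t) : Monotone (betaF t) := by
  intro l l' hl
  unfold betaF
  gcongr

lemma gammaF_mem_EV {n : ℕ} (hn : 1 ≤ n) : gammaF t n ∈ EV t :=
  Or.inl (Or.inl ⟨n, hn, rfl⟩)

lemma betaF_mem_EV {l : ℕ} (hl : Even l) (hl2 : 2 ≤ l) : betaF t l ∈ EV t :=
  Or.inr ⟨l, hl, hl2, rfl⟩

lemma gammaF_seven : gammaF t 7 = 7 * t * (2 + 7 * (t ^ 3)⁻¹) := by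
  unfold gammaF
  push_cast
  ring

lemma alphaF_one : alphaF t 1 = gammaF t 1 := by
  unfold alphaF gammaF
  push_cast
  ring

lemma alphaF_three : alphaF t 3 = t * (14 + (t ^ 3)⁻¹) := by
  unfold alphaF
  push_cast
  ring

lemma betaF_two : betaF t 2 = 8 * t := by
  unfold betaF
  push_cast
  ring

lemma betaF_four : betaF t 4 = 24 * t := by
  unfold betaF
  push_cast
  ring

lemma betaF_four_le_alphaF_five (ht : 0 ≤ t) : betaF t 4 ≤ alphaF t 5 := by
  have : 0 ≤ t * (t ^ 3)⁻¹ := by positivity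
  norm_num [alphaF, betaF]
  nlinarith

lemma gammaF_seven_sub_betaF_four :
    gammaF t 7 - betaF t 4 = 49 * t * ((t ^ 3)⁻¹ - 10 / 49) := by
  norm_num [gammaF, betaF]
  ring

lemma mem_EV_cases (ht : 0 ≤ t) {e : ℝ} (he : e ∈ EV t) :
    e ∈ ({gammaF t 1, gammaF t 2, gammaF t 3, gammaF t 4, gammaF t 5, gammaF t 6, 8 * t,
      t * (14 + (t ^ 3)⁻¹)} : Set ℝ) ∨ gammaF t 7 ≤ e ∨ betaF t 4 ≤ e := by
  rcases he with (⟨n, hn, rfl⟩ | ⟨k, hk, -, rfl⟩) | ⟨l, hl, hl2, rfl⟩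
  · rcases lt_or_ge n 7 with hn7 | hn7
    · left
      interval_cases n <;> simp
    · exact Or.inr (Or.inl (gammaF_monotone ht hn7))
  · obtain rfl | rfl | hk5 : k = 1 ∨ k = 3 ∨ 5 ≤ k := by
      obtain ⟨m, rfl⟩ := hk
      omega
    · simp [alphaF_one]
    · simp [alphaF_three]
    · exact Or.inr (Or.inr ((betaF_four_le_alphaF_five ht).trans (alphaF_monotone ht hk5)))
  · obtain rfl | hl4 : l = 2 ∨ 4 ≤ l := by
      obtain ⟨m, rfl⟩ := hl
      omega
    · simp [betaF_two]
    · exact Or.inr (Or.inr (betaF_monotone ht hl4))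

theorem berger_lambda9 (t : ℝ) (ht : 0 < t) :
    ∃ V : ℝ,
      ((t ^ 3)⁻¹ ≤ 10 / 49 → V = 7 * t * (2 + 7 * (t ^ 3)⁻¹)) ∧
      (10 / 49 ≤ (t ^ 3)⁻¹ → V = 24 * t) ∧
      V ∈ EV t ∧
      ∀ e ∈ EV t, e ∉ ({gammaF t 1, gammaF t 2, gammaF t 3, gammaF t 4, gammaF t 5, gammaF t 6, 8 * t, t * (14 + (t ^ 3)⁻¹)} : Set ℝ) → V ≤ e := by
  have hdiff := gammaF_seven_sub_betaF_four (t := t)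
  refine ⟨min (gammaF t 7) (betaF t 4), fun hs => ?_, fun hs => ?_, ?_, ?_⟩
  · rw [min_eq_left (by nlinarith), gammaF_seven]
  · rw [min_eq_right (by nlinarith), betaF_four]
  · rcases min_choice (gammaF t 7) (betaF t 4) with h | h <;> rw [h]
    · exact gammaF_mem_EV (by norm_num)
    · exact betaF_mem_EV (by decide) (by norm_num)
  · intro e he hne
    rcases mem_EV_cases ht.le he with hlow | h | h
    · exact absurd hlow hne
    · exact (min_le_left _ _).trans h
    · exact (min_le_right _ _).trans h
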